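/- In the Weyl-group setting (V rational inner product space, orthogonal maps w_0,…,w_m, reflections s_{j_ℓ} in α_{j_ℓ}, w = w_0 s_{j_1} w_1 ⋯ s_{j_m} w_m, w^Δ = w_0 ⋯ w_m, β_{j_ℓ} = w_0 s_{j_1} ⋯ w_{ℓ−1}(α_{j_ℓ}), β^Δ_{j_ℓ} = w_0 ⋯ w_{ℓ−1}(α_{j_ℓ}), M the skew-symmetric matrix with M_{hℓ} = ⟨β_{j_h}, β_{j_ℓ}⟩ for h<ℓ, B(γ) = Σ_ℓ ⟨γ, β_{j_ℓ}⟩ e_ℓ, f(x,y) = M(x) + B(y)): for every γ ∈ V, the pair (Σ_{h=1}^m ⟨(β^Δ_{j_h})∨, w^Δ(γ)⟩ e_h, (w + w^Δ)(γ)) lies in the kernel of f. -/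

import Mathlib

/-!
Put `v_k = w₀ s₁ w₁ ⋯ s_k w_k w_{k+1} ⋯ w_m (γ)`, so that `v₀ = w^Δ(γ)` and `v_m = w(γ)`.
Writing `x = w_k ⋯ w_m (γ)`, we have `v_{k-1} = P x` and `v_k = P (s_k x)` with
`P = w₀ s₁ ⋯ s_{k-1} w_{k-1}` orthogonal, and `s_k x = x - ⟨α_k∨, x⟩ α_k` where
`⟨α_k∨, x⟩ = ⟨(β^Δ_k)∨, w^Δ(γ)⟩ = c_k`. Hence `v_k = v_{k-1} - c_k β_k`, and telescoping gives
`v_{k-1} = w^Δ(γ) - ∑_{h<k} c_h β_h` and `v_k = w(γ) + ∑_{h>k} c_h β_h`. Finally `x + s_k x ⊥ α_k`,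
so `⟨β_k, v_{k-1} + v_k⟩ = 0`, and this is exactly the `k`-th coordinate of `M c + B((w + w^Δ)γ)`.
-/

open scoped RealInnerProductSpace

/-- `pref w s ℓ = w₀ s₁ w₁ ⋯ s_ℓ w_ℓ` (composition of endomorphisms). -/
def pref {V : Type*} [NormedAddCommGroup V] [InnerProductSpace ℝ V]
    (w s : ℕ → Module.End ℝ V) : ℕ → Module.End ℝ V
  | 0 => w 0
  | ℓ + 1 => pref w s ℓ * s (ℓ + 1) * w (ℓ + 1)

/-- `plainPref w ℓ = w₀ w₁ ⋯ w_ℓ`. -/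
def plainPref {V : Type*} [NormedAddCommGroup V] [InnerProductSpace ℝ V]
    (w : ℕ → Module.End ℝ V) : ℕ → Module.End ℝ V
  | 0 => w 0
  | ℓ + 1 => plainPref w ℓ * w (ℓ + 1)

/-- `suff w m ℓ = w_ℓ w_{ℓ+1} ⋯ w_m`. -/
def suff {V : Type*} [NormedAddCommGroup V] [InnerProductSpace ℝ V]
    (w : ℕ → Module.End ℝ V) (m ℓ : ℕ) : Module.End ℝ V :=
  ((List.range (m + 1 - ℓ)).map fun i => w (ℓ + i)).prod

/-- `uop w s m ℓ = w₀ s₁ w₁ ⋯ w_{ℓ-1} (s_ℓ - id) w_ℓ ⋯ w_m`. -/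
def uop {V : Type*} [NormedAddCommGroup V] [InnerProductSpace ℝ V]
    (w s : ℕ → Module.End ℝ V) (m ℓ : ℕ) : Module.End ℝ V :=
  pref w s (ℓ - 1) * (s ℓ - 1) * suff w m ℓ

/-- `vop w s m ℓ = w₀ s₁ w₁ ⋯ w_{ℓ-1} (s_ℓ + id) w_ℓ ⋯ w_m`. -/
def vop {V : Type*} [NormedAddCommGroup V] [InnerProductSpace ℝ V]
    (w s : ℕ → Module.End ℝ V) (m ℓ : ℕ) : Module.End ℝ V :=
  pref w s (ℓ - 1) * (s ℓ + 1) * suff w m ℓ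

/-- `β_{j_ℓ} = w₀ s₁ w₁ ⋯ s_{ℓ-1} w_{ℓ-1} (α_{j_ℓ})`. -/
def betaV {V : Type*} [NormedAddCommGroup V] [InnerProductSpace ℝ V]
    (w s : ℕ → Module.End ℝ V) (α : ℕ → V) (ℓ : ℕ) : V :=
  pref w s (ℓ - 1) (α ℓ)

/-- `β^Δ_{j_ℓ} = w₀ w₁ ⋯ w_{ℓ-1} (α_{j_ℓ})`. -/
def betaD {V : Type*} [NormedAddCommGroup V] [InnerProductSpace ℝ V]
    (w : ℕ → Module.End ℝ V) (α : ℕ → V) (ℓ : ℕ) : V :=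
  plainPref w (ℓ - 1) (α ℓ)

/-- `⟨(β^Δ_{j_ℓ})∨, w^Δ(γ)⟩` where `β∨ = (2/⟨β,β⟩)β`. -/
noncomputable def coeffc {V : Type*} [NormedAddCommGroup V] [InnerProductSpace ℝ V]
    (w s : ℕ → Module.End ℝ V) (α : ℕ → V) (m : ℕ) (γ : V) (ℓ : ℕ) : ℝ :=
  (2 / ⟪betaD w α ℓ, betaD w α ℓ⟫) * ⟪betaD w α ℓ, plainPref w m γ⟫
open Finset

section Reflection

variable {V : Type*} [NormedAddCommGroup V] [InnerProductSpace ℝ V]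

lemma inner_reflect_reflect (a x y : V) :
    ⟪x - (2 * ⟪a, x⟫ / ⟪a, a⟫) • a, y - (2 * ⟪a, y⟫ / ⟪a, a⟫) • a⟫ = ⟪x, y⟫ := by
  rcases eq_or_ne a 0 with rfl | ha
  · simp
  have haa : ⟪a, a⟫ ≠ 0 := inner_self_ne_zero.mpr ha
  simp only [inner_sub_left, inner_sub_right, real_inner_smul_left, real_inner_smul_right,
    real_inner_comm a x]
  field_simp
  ring

lemma inner_add_reflect (a x : V) : ⟪a, x + (x - (2 * ⟪a, x⟫ / ⟪a, a⟫) • a)⟫ = 0 := by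
  rcases eq_or_ne a 0 with rfl | ha
  · simp
  have haa : ⟪a, a⟫ ≠ 0 := inner_self_ne_zero.mpr ha
  rw [inner_add_right, inner_sub_right, real_inner_smul_right]
  field_simp
  ring

end Reflection

section Words

variable {V : Type*} [NormedAddCommGroup V] [InnerProductSpace ℝ V]
  {w s : ℕ → Module.End ℝ V}

lemma inner_pref_pref (hw : ∀ i (x y : V), ⟪w i x, w i y⟫ = ⟪x, y⟫)
    (hs : ∀ i (x y : V), ⟪s i x, s i y⟫ = ⟪x, y⟫) (k : ℕ) (x y : V) :
    ⟪pref w s k x, pref w s k y⟫ = ⟪x, y⟫ := by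
  induction k generalizing x y with
  | zero => exact hw 0 x y
  | succ k ih => simp only [pref, Module.End.mul_apply, ih, hs, hw]

lemma inner_plainPref_plainPref (hw : ∀ i (x y : V), ⟪w i x, w i y⟫ = ⟪x, y⟫) (k : ℕ)
    (x y : V) : ⟪plainPref w k x, plainPref w k y⟫ = ⟪x, y⟫ := by
  induction k generalizing x y with
  | zero => exact hw 0 x y
  | succ k ih => simp only [plainPref, Module.End.mul_apply, ih, hw]

lemma suff_of_lt {m k : ℕ} (hk : m < k) : suff w m k = 1 := by
  simp [suff, Nat.sub_eq_zero_of_le hk]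

lemma suff_eq_mul_suff_succ {m k : ℕ} (hk : k ≤ m) : suff w m k = w k * suff w m (k + 1) := by
  rw [suff, suff, show m + 1 - k = m - k + 1 by omega, show m + 1 - (k + 1) = m - k by omega,
    List.range_succ_eq_map]
  simp only [List.map_cons, List.map_map, List.prod_cons, add_zero]
  congr 2
  exact List.map_congr_left fun i _ => congrArg w (by omega)

lemma plainPref_mul_suff {m k : ℕ} (hk : k ≤ m) :
    plainPref w k * suff w m (k + 1) = plainPref w m := by
  induction hk using Nat.decreasingInduction with
  | self => rw [suff_of_lt (Nat.lt_succ_self m), mul_one]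
  | of_succ k hk ih => rw [suff_eq_mul_suff_succ hk, ← mul_assoc]; exact ih

end Words

section TruncatedWord

variable {V : Type*} [NormedAddCommGroup V] [InnerProductSpace ℝ V]
  (w s : ℕ → Module.End ℝ V) (m : ℕ)

/-- `w₀ s₁ w₁ ⋯ s_k w_k w_{k+1} ⋯ w_m`. -/
def truncWord (k : ℕ) : Module.End ℝ V :=
  pref w s k * suff w m (k + 1)

lemma truncWord_zero : truncWord w s m 0 = plainPref w m :=
  plainPref_mul_suff (Nat.zero_le m)

lemma truncWord_self : truncWord w s m m = pref w s m := by
  rw [truncWord, suff_of_lt (Nat.lt_succ_self m), mul_one]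

variable {w s m} {α : ℕ → V}

lemma truncWord_succ_apply {k : ℕ} (hk : k < m) (γ : V) :
    truncWord w s m (k + 1) γ = pref w s k (s (k + 1) (suff w m (k + 1) γ)) := by
  simp only [truncWord, pref, Module.End.mul_apply, suff_eq_mul_suff_succ (w := w) hk]

lemma coeffc_succ (hw : ∀ i (x y : V), ⟪w i x, w i y⟫ = ⟪x, y⟫) {k : ℕ} (hk : k < m) (γ : V) :
    coeffc w s α m γ (k + 1) = 2 * ⟪α (k + 1), suff w m (k + 1) γ⟫ / ⟪α (k + 1), α (k + 1)⟫ := by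
  rw [coeffc, betaD, Nat.add_sub_cancel, ← plainPref_mul_suff hk.le, Module.End.mul_apply,
    inner_plainPref_plainPref hw, inner_plainPref_plainPref hw]
  ring

lemma truncWord_succ (hw : ∀ i (x y : V), ⟪w i x, w i y⟫ = ⟪x, y⟫)
    (hs : ∀ i (v : V), s i v = v - ((2 * ⟪α i, v⟫) / ⟪α i, α i⟫) • α i)
    {k : ℕ} (hk : k < m) (γ : V) :
    truncWord w s m (k + 1) γ =
      truncWord w s m k γ - coeffc w s α m γ (k + 1) • betaV w s α (k + 1) := by
  rw [truncWord_succ_apply hk, hs, map_sub, map_smul, coeffc_succ hw hk]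
  rfl

lemma inner_betaV_truncWord_add_truncWord_succ (hw : ∀ i (x y : V), ⟪w i x, w i y⟫ = ⟪x, y⟫)
    (hs : ∀ i (v : V), s i v = v - ((2 * ⟪α i, v⟫) / ⟪α i, α i⟫) • α i)
    {k : ℕ} (hk : k < m) (γ : V) :
    ⟪betaV w s α (k + 1), truncWord w s m k γ + truncWord w s m (k + 1) γ⟫ = 0 := by
  have hs_inner : ∀ i (x y : V), ⟪s i x, s i y⟫ = ⟪x, y⟫ := fun i x y => by
    rw [hs, hs]; exact inner_reflect_reflect (α i) x y
  rw [truncWord_succ_apply hk, truncWord, Module.End.mul_apply, ← map_add, betaV,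
    Nat.add_sub_cancel, inner_pref_pref hw hs_inner, hs]
  exact inner_add_reflect _ _

lemma truncWord_eq_sub_sum (hw : ∀ i (x y : V), ⟪w i x, w i y⟫ = ⟪x, y⟫)
    (hs : ∀ i (v : V), s i v = v - ((2 * ⟪α i, v⟫) / ⟪α i, α i⟫) • α i)
    {k : ℕ} (hk : k ≤ m) (γ : V) :
    truncWord w s m k γ =
      plainPref w m γ - ∑ i ∈ range k, coeffc w s α m γ (i + 1) • betaV w s α (i + 1) := by
  induction k with
  | zero => simp [truncWord_zero]
  | succ k ih => rw [truncWord_succ hw hs hk, ih (by omega), sum_range_succ, sub_add_eq_sub_sub]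

lemma truncWord_add_truncWord_succ (hw : ∀ i (x y : V), ⟪w i x, w i y⟫ = ⟪x, y⟫)
    (hs : ∀ i (v : V), s i v = v - ((2 * ⟪α i, v⟫) / ⟪α i, α i⟫) • α i)
    {k : ℕ} (hk : k < m) (γ : V) :
    truncWord w s m k γ + truncWord w s m (k + 1) γ = (pref w s m + plainPref w m) γ +
      (∑ i ∈ Ico (k + 1) m, coeffc w s α m γ (i + 1) • betaV w s α (i + 1) -
        ∑ i ∈ range k, coeffc w s α m γ (i + 1) • betaV w s α (i + 1)) := by
  have htop := truncWord_eq_sub_sum hw hs (le_refl m) γ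
  rw [truncWord_self, ← sum_range_add_sum_Ico _ hk] at htop
  rw [truncWord_eq_sub_sum hw hs hk.le, truncWord_eq_sub_sum hw hs hk, LinearMap.add_apply, htop]
  abel

end TruncatedWord

lemma sum_range_ite_lt_ite_gt {M : Type*} [AddCommGroup M] {m ℓ : ℕ} (hℓ : ℓ < m) (F : ℕ → M) :
    ∑ i ∈ range m, (if ℓ < i then F i else if i < ℓ then -F i else 0) =
      ∑ i ∈ Ico (ℓ + 1) m, F i - ∑ i ∈ range ℓ, F i := by
  rw [← sum_range_add_sum_Ico _ hℓ, sum_range_succ, sub_eq_neg_add, ← sum_neg_distrib]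
  simp only [lt_irrefl, if_false, add_zero]
  congr 1
  · exact sum_congr rfl fun i hi => by
      simp [(mem_range.mp hi).not_gt, mem_range.mp hi]
  · exact sum_congr rfl fun i hi => by simp [Nat.lt_of_succ_le (mem_Ico.mp hi).1]

theorem pair_in_kernel_of_f_general
    {V : Type*} [NormedAddCommGroup V] [InnerProductSpace ℝ V]
    (m : ℕ) (w s : ℕ → Module.End ℝ V) (α : ℕ → V)
    (hw : ∀ i (x y : V), ⟪w i x, w i y⟫ = ⟪x, y⟫)
    (hs : ∀ ℓ (v : V), s ℓ v = v - ((2 * ⟪α ℓ, v⟫) / ⟪α ℓ, α ℓ⟫) • α ℓ)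
    (M : Matrix (Fin m) (Fin m) ℝ)
    (hM : ∀ i l : Fin m, M i l =
      if i < l then ⟪betaV w s α (↑i + 1), betaV w s α (↑l + 1)⟫
      else if l < i then -⟪betaV w s α (↑l + 1), betaV w s α (↑i + 1)⟫ else 0)
    (γ : V) :
    (M.mulVec (fun h : Fin m => coeffc w s α m γ (↑h + 1)) +
        fun ℓ : Fin m => ⟪(pref w s m + plainPref w m) γ, betaV w s α (↑ℓ + 1)⟫) = 0 := by
  funext ℓ
  let F : ℕ → ℝ := fun i => ⟪betaV w s α (ℓ + 1), coeffc w s α m γ (i + 1) • betaV w s α (i + 1)⟫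
  have hrow : M.mulVec (fun h : Fin m => coeffc w s α m γ (h + 1)) ℓ =
      ∑ i ∈ range m, (if ℓ < i then F i else if i < ℓ then -F i else 0) := by
    rw [Matrix.mulVec, dotProduct, ← Fin.sum_univ_eq_sum_range]
    refine sum_congr rfl fun h _ => ?_
    simp only [hM, Fin.lt_def, F, real_inner_smul_right, real_inner_comm (betaV w s α (h + 1))]
    split_ifs <;> ring
  have hzero := inner_betaV_truncWord_add_truncWord_succ hw hs ℓ.isLt γ
  rw [truncWord_add_truncWord_succ hw hs ℓ.isLt, inner_add_right, inner_sub_right, inner_sum,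
    inner_sum] at hzero
  rw [Pi.add_apply, hrow, sum_range_ite_lt_ite_gt ℓ.isLt, Pi.zero_apply, real_inner_comm]
  linarith

theorem pair_in_kernel_of_f
    {V : Type*} [NormedAddCommGroup V] [InnerProductSpace ℝ V] [FiniteDimensional ℝ V]
    (m : ℕ) (w s : ℕ → Module.End ℝ V) (α : ℕ → V)
    (hα : ∀ ℓ, α ℓ ≠ 0)
    (hw : ∀ i (x y : V), ⟪w i x, w i y⟫ = ⟪x, y⟫)
    (hs : ∀ ℓ (v : V), s ℓ v = v - ((2 * ⟪α ℓ, v⟫) / ⟪α ℓ, α ℓ⟫) • α ℓ)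
    (M : Matrix (Fin m) (Fin m) ℝ)
    (hM : ∀ i l : Fin m, M i l =
      if i < l then ⟪betaV w s α (↑i + 1), betaV w s α (↑l + 1)⟫
      else if l < i then -⟪betaV w s α (↑l + 1), betaV w s α (↑i + 1)⟫ else 0)
    (γ : V) :
    (M.mulVec (fun h : Fin m => coeffc w s α m γ (↑h + 1)) +
        fun ℓ : Fin m => ⟪(pref w s m + plainPref w m) γ, betaV w s α (↑ℓ + 1)⟫) = 0 :=
  pair_in_kernel_of_f_general m w s α hw hs M hM γ
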